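/- arXiv:2003.07587 — 5 statements merged into one kernel-verified Lean document; each statement's English description precedes it below -/
import Mathlib

section
/- Let (ℰ,𝓗) be a closed bilinear form on 𝓛 with constants α₀, K and associated resolvent (G_α)_{α>α₀}, and for β > α₀ set ℰ^{(β)}(u,v) := β⟨u − βG_β u, v⟩_𝓛. If u ∈ 𝓛 satisfies limsup_{β→∞} ℰ^{(β)}(u,u) < ∞, then u ∈ 𝓗. -/
/-!
For large `β` the vectors `w_β = β G_β u` lie in `𝓗` and satisfy
`β ⟨u - w_β, u⟩ = β ‖u - w_β‖² + ℰ(w_β, w_β)`, so a bound on the left-hand side makes `w_β`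
bounded in `𝓗` and convergent to `u` in `𝓛`. Minimizing the `𝓗`-norm over the convex hulls of
the tails of a bounded sequence gives, by the parallelogram law, a Cauchy sequence in `𝓗`; its
`𝓗`-limit lies in `𝓗` and is also its `𝓛`-limit, which is `u`.
-/

open Filter Topology
open scoped RealInnerProductSpace

noncomputable section

/-- The `𝓗`-norm associated to a bilinear form `E` with constant `α₀`:
`‖u‖_𝓗 = (ℰ^s_{α₀+1}(u,u))^{1/2} = (E(u,u) + (α₀+1)⟨u,u⟩_𝓛)^{1/2}`. -/
def Hnorm {L : Type*} [NormedAddCommGroup L] [InnerProductSpace ℝ L]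
    (E : L → L → ℝ) (α₀ : ℝ) (u : L) : ℝ :=
  Real.sqrt (E u u + (α₀ + 1) * ⟪u, u⟫)

/-- `(ℰ, 𝓗)` is a closed bilinear form on the real Hilbert space `L` with constants
`α₀ ∈ ℝ` and `K ≥ 1`: `𝓗` is a dense subspace, `E` is bilinear on `𝓗`, the symmetric part
`ℰ^s_{α₀}` is positive (hence `ℰ^s_{α₀+1}` is positive definite and dominates the `𝓛`-norm),
`𝓗` is complete for the `𝓗`-norm (ℰ.1), and the weak sector condition (ℰ.2) holds. -/
structure IsClosedForm {L : Type*} [NormedAddCommGroup L] [InnerProductSpace ℝ L]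
    (E : L → L → ℝ) (H : Submodule ℝ L) (α₀ K : ℝ) : Prop where
  one_le_K : 1 ≤ K
  dense_dom : Dense (H : Set L)
  add_left : ∀ u v w : L, u ∈ H → v ∈ H → w ∈ H → E (u + v) w = E u w + E v w
  add_right : ∀ u v w : L, u ∈ H → v ∈ H → w ∈ H → E u (v + w) = E u v + E u w
  smul_left : ∀ (c : ℝ) (u v : L), u ∈ H → v ∈ H → E (c • u) v = c * E u v
  smul_right : ∀ (c : ℝ) (u v : L), u ∈ H → v ∈ H → E u (c • v) = c * E u v
  nonneg : ∀ u ∈ H, 0 ≤ E u u + α₀ * ⟪u, u⟫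
  hilbert : ∀ u : ℕ → L, (∀ n, u n ∈ H) →
      (∀ ε > (0:ℝ), ∃ N : ℕ, ∀ m ≥ N, ∀ n ≥ N, Hnorm E α₀ (u m - u n) < ε) →
      ∃ l ∈ H, Tendsto (fun n => Hnorm E α₀ (u n - l)) atTop (𝓝 0)
  sector : ∀ u ∈ H, ∀ v ∈ H,
      |E u v + (α₀ + 1) * ⟪u, v⟫| ≤ K * Hnorm E α₀ u * Hnorm E α₀ v

/-- `Θ(u) = sup { ℰ_{α₀+1}(v,u) : v ∈ 𝓗, ‖v‖_𝓗 = 1 }`. -/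
def Theta {L : Type*} [NormedAddCommGroup L] [InnerProductSpace ℝ L]
    (E : L → L → ℝ) (H : Submodule ℝ L) (α₀ : ℝ) (u : L) : ℝ :=
  sSup {x : ℝ | ∃ v ∈ H, Hnorm E α₀ v = 1 ∧ x = E v u + (α₀ + 1) * ⟪v, u⟫}

/-- `(G_α)_{α > α₀}` is the resolvent associated to the closed form `(ℰ,𝓗)`:
`G_α(𝓛) ⊆ 𝓗`, `ℰ_α(G_α f, u) = ⟨f,u⟩_𝓛` for all `f ∈ 𝓛`, `u ∈ 𝓗`, the resolvent equation
`G_α − G_β + (α−β) G_α G_β = 0` holds, and `‖(α−α₀) G_α f‖_𝓛 ≤ ‖f‖_𝓛`. -/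
def IsResolventOf {L : Type*} [NormedAddCommGroup L] [InnerProductSpace ℝ L]
    (E : L → L → ℝ) (H : Submodule ℝ L) (α₀ : ℝ) (G : ℝ → L →ₗ[ℝ] L) : Prop :=
  (∀ α, α₀ < α → ∀ f : L, G α f ∈ H) ∧
  (∀ α, α₀ < α → ∀ f : L, ∀ u ∈ H, E (G α f) u + α * ⟪G α f, u⟫ = ⟪f, u⟫) ∧
  (∀ α β, α₀ < α → α₀ < β → ∀ f : L, G α f - G β f + (α - β) • G α (G β f) = 0) ∧
  (∀ α, α₀ < α → ∀ f : L, ‖(α - α₀) • G α f‖ ≤ ‖f‖)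

open Set

theorem Filter.exists_eventually_le_of_limsup_coe_lt_top {α : Type*} {l : Filter α}
    {f : α → ℝ} (h : limsup (fun x => (f x : EReal)) l < ⊤) : ∃ M : ℝ, ∀ᶠ x in l, f x ≤ M := by
  obtain ⟨M, hlt, -⟩ := EReal.lt_iff_exists_real_btwn.1 h
  exact ⟨M, (eventually_lt_of_limsup_lt hlt).mono fun x hx => (EReal.coe_lt_coe_iff.1 hx).le⟩

def HnormSq {L : Type*} [NormedAddCommGroup L] [InnerProductSpace ℝ L]
    (E : L → L → ℝ) (α₀ : ℝ) (u : L) : ℝ :=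
  E u u + (α₀ + 1) * ⟪u, u⟫

theorem Hnorm_eq_sqrt_HnormSq {L : Type*} [NormedAddCommGroup L] [InnerProductSpace ℝ L]
    (E : L → L → ℝ) (α₀ : ℝ) (u : L) : Hnorm E α₀ u = √(HnormSq E α₀ u) :=
  rfl

namespace IsClosedForm

variable {L : Type*} [NormedAddCommGroup L] [InnerProductSpace ℝ L]
  {E : L → L → ℝ} {H : Submodule ℝ L} {α₀ K : ℝ} {u x y : L}

theorem sq_norm_le_HnormSq (hcf : IsClosedForm E H α₀ K) (hu : u ∈ H) :
    ‖u‖ ^ 2 ≤ HnormSq E α₀ u := by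
  have h := hcf.nonneg u hu
  rw [real_inner_self_eq_norm_sq] at h
  rw [HnormSq, real_inner_self_eq_norm_sq]
  linarith

theorem HnormSq_nonneg (hcf : IsClosedForm E H α₀ K) (hu : u ∈ H) : 0 ≤ HnormSq E α₀ u :=
  (sq_nonneg _).trans (hcf.sq_norm_le_HnormSq hu)

theorem norm_le_Hnorm (hcf : IsClosedForm E H α₀ K) (hu : u ∈ H) : ‖u‖ ≤ Hnorm E α₀ u :=
  Real.le_sqrt_of_sq_le (hcf.sq_norm_le_HnormSq hu)

theorem sub_left (hcf : IsClosedForm E H α₀ K) {z : L} (hx : x ∈ H) (hy : y ∈ H) (hz : z ∈ H) :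
    E (x - y) z = E x z - E y z := by
  rw [sub_eq_add_neg, ← neg_one_smul ℝ y, hcf.add_left _ _ _ hx (H.smul_mem _ hy) hz,
    hcf.smul_left _ _ _ hy hz]
  ring

theorem sub_right (hcf : IsClosedForm E H α₀ K) {z : L} (hx : x ∈ H) (hy : y ∈ H) (hz : z ∈ H) :
    E z (x - y) = E z x - E z y := by
  rw [sub_eq_add_neg, ← neg_one_smul ℝ y, hcf.add_right _ _ _ hz hx (H.smul_mem _ hy),
    hcf.smul_right _ _ _ hz hy]
  ring

theorem HnormSq_smul (hcf : IsClosedForm E H α₀ K) (c : ℝ) (hu : u ∈ H) :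
    HnormSq E α₀ (c • u) = c ^ 2 * HnormSq E α₀ u := by
  simp only [HnormSq, hcf.smul_left c u _ hu (H.smul_mem c hu), hcf.smul_right c u u hu hu,
    real_inner_smul_left, real_inner_smul_right]
  ring

theorem HnormSq_add_add_HnormSq_sub (hcf : IsClosedForm E H α₀ K) (hx : x ∈ H) (hy : y ∈ H) :
    HnormSq E α₀ (x + y) + HnormSq E α₀ (x - y) = 2 * (HnormSq E α₀ x + HnormSq E α₀ y) := by
  simp only [HnormSq, hcf.add_left _ _ _ hx hy (H.add_mem hx hy), hcf.add_right _ _ _ hx hx hy,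
    hcf.add_right _ _ _ hy hx hy, hcf.sub_left hx hy (H.sub_mem hx hy), hcf.sub_right hx hy hx,
    hcf.sub_right hx hy hy, real_inner_add_add_self, real_inner_sub_sub_self]
  ring

/-- The midpoint of `x` and `y` is a competitor in `C`; the rest is the parallelogram law. -/
theorem HnormSq_sub_le_of_almost_minimizers (hcf : IsClosedForm E H α₀ K) {C : Set L}
    (hC : Convex ℝ C) (hCH : C ⊆ H) {d δ : ℝ} (hd : ∀ z ∈ C, d ≤ HnormSq E α₀ z)
    (hx : x ∈ C) (hy : y ∈ C) (hxδ : HnormSq E α₀ x ≤ d + δ) (hyδ : HnormSq E α₀ y ≤ d + δ) :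
    HnormSq E α₀ (x - y) ≤ 4 * δ := by
  have hmid : (2⁻¹ : ℝ) • (x + y) ∈ C := by
    rw [smul_add]
    exact hC hx hy (by norm_num) (by norm_num) (by norm_num)
  have hsum := hd _ hmid
  rw [hcf.HnormSq_smul _ (H.add_mem (hCH hx) (hCH hy))] at hsum
  linarith [hcf.HnormSq_add_add_HnormSq_sub (hCH hx) (hCH hy)]

theorem Hnorm_cauchy_of_almost_minimizers (hcf : IsClosedForm E H α₀ K) {T : ℕ → Set L}
    (hanti : Antitone T) (hconv : ∀ n, Convex ℝ (T n)) (hTH : ∀ n, T n ⊆ H) {D e : ℕ → ℝ}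
    {s : ℝ} (hD_le : ∀ n, ∀ x ∈ T n, D n ≤ HnormSq E α₀ x) (hD : Tendsto D atTop (𝓝 s))
    (he : Tendsto e atTop (𝓝 s)) {v : ℕ → L} (hvT : ∀ n, v n ∈ T n)
    (hv : ∀ n, HnormSq E α₀ (v n) ≤ e n) :
    ∀ ε > (0 : ℝ), ∃ N : ℕ, ∀ m ≥ N, ∀ n ≥ N, Hnorm E α₀ (v m - v n) < ε := by
  intro ε hε
  obtain ⟨δ, hδ0, hδε⟩ : ∃ δ : ℝ, 0 < δ ∧ 8 * δ < ε ^ 2 :=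
    ⟨ε ^ 2 / 16, by positivity, by linarith [show 0 < ε ^ 2 by positivity]⟩
  obtain ⟨N, hN⟩ := eventually_atTop.1 ((hD.eventually (lt_mem_nhds (sub_lt_self s hδ0))).and
    (he.eventually (gt_mem_nhds (lt_add_of_pos_right s hδ0))))
  have hvN : ∀ m ≥ N, HnormSq E α₀ (v m) ≤ D N + 2 * δ := fun m hm => by
    linarith [hv m, (hN m hm).2, (hN N le_rfl).1]
  refine ⟨N, fun m hm n hn => ?_⟩
  have hclose := hcf.HnormSq_sub_le_of_almost_minimizers (hconv N) (hTH N) (hD_le N)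
    (hanti hm (hvT m)) (hanti hn (hvT n)) (hvN m hm) (hvN n hn)
  rw [Hnorm_eq_sqrt_HnormSq, Real.sqrt_lt' hε]
  linarith

theorem exists_tendsto_of_antitone_convex (hcf : IsClosedForm E H α₀ K) {T : ℕ → Set L}
    (hanti : Antitone T) (hconv : ∀ n, Convex ℝ (T n)) (hTH : ∀ n, T n ⊆ H) {R : ℝ}
    (hR : ∀ n, ∃ x ∈ T n, HnormSq E α₀ x ≤ R) :
    ∃ v : ℕ → L, (∀ n, v n ∈ T n) ∧ ∃ l ∈ H, Tendsto v atTop (𝓝 l) := by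
  set D : ℕ → ℝ := fun n => sInf (HnormSq E α₀ '' T n)
  have hne : ∀ n, (HnormSq E α₀ '' T n).Nonempty := fun n =>
    let ⟨x, hx, _⟩ := hR n; ⟨_, mem_image_of_mem _ hx⟩
  have hbdd : ∀ n, BddBelow (HnormSq E α₀ '' T n) := fun n =>
    ⟨0, by rintro _ ⟨x, hx, rfl⟩; exact hcf.HnormSq_nonneg (hTH n hx)⟩
  have hD_le : ∀ n, ∀ x ∈ T n, D n ≤ HnormSq E α₀ x := fun n x hx =>
    csInf_le (hbdd n) (mem_image_of_mem _ hx)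
  have hD_mono : Monotone D := fun m n hmn =>
    csInf_le_csInf (hbdd m) (hne n) (image_mono (hanti hmn))
  have hD_bdd : BddAbove (range D) := ⟨R, by
    rintro _ ⟨n, rfl⟩
    obtain ⟨x, hx, hxR⟩ := hR n
    exact (hD_le n x hx).trans hxR⟩
  have hD_lim : Tendsto D atTop (𝓝 (⨆ n, D n)) := tendsto_atTop_ciSup hD_mono hD_bdd
  have hmin : ∀ n, ∃ x ∈ T n, HnormSq E α₀ x < D n + 1 / ((n : ℝ) + 1) := fun n => by
    obtain ⟨_, ⟨x, hx, rfl⟩, hlt⟩ :=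
      (csInf_lt_iff (hbdd n) (hne n)).1 (lt_add_of_pos_right (D n) Nat.one_div_pos_of_nat)
    exact ⟨x, hx, hlt⟩
  choose v hvT hv using hmin
  obtain ⟨l, hl, hvl⟩ := hcf.hilbert v (fun n => hTH n (hvT n))
    (hcf.Hnorm_cauchy_of_almost_minimizers hanti hconv hTH hD_le hD_lim
      (by simpa using hD_lim.add tendsto_one_div_add_atTop_nhds_zero_nat) hvT (fun n => (hv n).le))
  refine ⟨v, hvT, l, hl, tendsto_iff_norm_sub_tendsto_zero.2 ?_⟩
  exact squeeze_zero (fun _ => norm_nonneg _)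
    (fun n => hcf.norm_le_Hnorm (H.sub_mem (hTH n (hvT n)) hl)) hvl

theorem mem_of_tendsto_of_HnormSq_le (hcf : IsClosedForm E H α₀ K) {w : ℕ → L} (R : ℝ)
    (hw : ∀ n, w n ∈ H) (hR : ∀ n, HnormSq E α₀ (w n) ≤ R) (hlim : Tendsto w atTop (𝓝 u)) :
    u ∈ H := by
  set T : ℕ → Set L := fun n => convexHull ℝ (w '' Ici n)
  obtain ⟨v, hvT, l, hl, hvl⟩ := hcf.exists_tendsto_of_antitone_convex (T := T)
    (fun _ _ h => convexHull_mono (image_mono (Ici_subset_Ici.2 h)))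
    (fun _ => convex_convexHull ℝ _)
    (fun _ => convexHull_min (by rintro _ ⟨k, -, rfl⟩; exact hw k) H.convex)
    (fun n => ⟨w n, subset_convexHull ℝ _ ⟨n, self_mem_Ici, rfl⟩, hR n⟩)
  have hvu : Tendsto v atTop (𝓝 u) := by
    refine Metric.tendsto_atTop.2 fun ε hε => ?_
    obtain ⟨N, hN⟩ := Metric.tendsto_atTop.1 hlim (ε / 2) (half_pos hε)
    refine ⟨N, fun n hn => ?_⟩
    have hball : T n ⊆ Metric.closedBall u (ε / 2) :=
      convexHull_min (by rintro _ ⟨k, hk, rfl⟩; exact (hN k (hn.trans hk)).le)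
        (convex_closedBall _ _)
    exact (hball (hvT n)).trans_lt (half_lt_self hε)
  exact tendsto_nhds_unique hvu hvl ▸ hl

end IsClosedForm

namespace IsResolventOf

variable {L : Type*} [NormedAddCommGroup L] [InnerProductSpace ℝ L]
  {E : L → L → ℝ} {H : Submodule ℝ L} {α₀ K : ℝ} {G : ℝ → L →ₗ[ℝ] L}

theorem approx_form_eq (hG : IsResolventOf E H α₀ G) (hcf : IsClosedForm E H α₀ K) {β : ℝ}
    (hβ : α₀ < β) (u : L) :
    β * ⟪u - β • G β u, u⟫ = β * ‖u - β • G β u‖ ^ 2 + HnormSq E α₀ (β • G β u)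
      - (α₀ + 1) * ‖β • G β u‖ ^ 2 := by
  have hg := hG.1 β hβ u
  have hres := hG.2.1 β hβ u _ hg
  rw [hcf.HnormSq_smul β hg, HnormSq, ← real_inner_self_eq_norm_sq,
    ← real_inner_self_eq_norm_sq]
  simp only [inner_sub_left, inner_sub_right, real_inner_smul_left, real_inner_smul_right,
    real_inner_comm u (G β u)]
  linear_combination (-β ^ 2) * hres

theorem eventually_norm_smul_apply_le (hG : IsResolventOf E H α₀ G) (u : L) :
    ∀ᶠ β in atTop, ‖β • G β u‖ ≤ 2 * ‖u‖ := by
  filter_upwards [eventually_gt_atTop α₀, eventually_ge_atTop (2 * α₀), eventually_ge_atTop 0]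
    with β hβ h2 h0
  have h := hG.2.2.2 β hβ u
  rw [norm_smul, Real.norm_of_nonneg (sub_pos.2 hβ).le] at h
  rw [norm_smul, Real.norm_of_nonneg h0]
  nlinarith [norm_nonneg (G β u)]

theorem eventually_bounds_of_approx_form_le (hG : IsResolventOf E H α₀ G) (hcf : IsClosedForm E H α₀ K)
    {u : L} {M : ℝ} (hM : ∀ᶠ β in atTop, β * ⟪u - β • G β u, u⟫ ≤ M) :
    ∀ᶠ β in atTop, α₀ < β ∧ β * ‖u - β • G β u‖ ^ 2 ≤ M + |α₀ + 1| * (2 * ‖u‖) ^ 2 ∧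
      HnormSq E α₀ (β • G β u) ≤ M + |α₀ + 1| * (2 * ‖u‖) ^ 2 := by
  filter_upwards [hM, eventually_gt_atTop α₀, eventually_ge_atTop 0,
    hG.eventually_norm_smul_apply_le u] with β hMβ hβ hβ0 hnorm
  have hw : (α₀ + 1) * ‖β • G β u‖ ^ 2 ≤ |α₀ + 1| * (2 * ‖u‖) ^ 2 :=
    calc (α₀ + 1) * ‖β • G β u‖ ^ 2 ≤ |α₀ + 1| * ‖β • G β u‖ ^ 2 := by
          gcongr; exact le_abs_self _
      _ ≤ |α₀ + 1| * (2 * ‖u‖) ^ 2 := by gcongr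
  have hdist : 0 ≤ β * ‖u - β • G β u‖ ^ 2 := by positivity
  have hHnorm := hcf.HnormSq_nonneg (H.smul_mem β (hG.1 β hβ u))
  have heq := hG.approx_form_eq hcf hβ u
  exact ⟨hβ, by linarith, by linarith⟩

theorem tendsto_smul_apply (hG : IsResolventOf E H α₀ G) (hcf : IsClosedForm E H α₀ K)
    {u : L} {M : ℝ} (hM : ∀ᶠ β in atTop, β * ⟪u - β • G β u, u⟫ ≤ M) :
    Tendsto (fun β => β • G β u) atTop (𝓝 u) := by
  set C := M + |α₀ + 1| * (2 * ‖u‖) ^ 2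
  have hC : Tendsto (fun β => √(C / β)) atTop (𝓝 0) := by
    simpa using (tendsto_const_nhds.div_atTop tendsto_id).sqrt
  refine tendsto_iff_norm_sub_tendsto_zero.2
    (squeeze_zero' (Eventually.of_forall fun _ => norm_nonneg _) ?_ hC)
  filter_upwards [hG.eventually_bounds_of_approx_form_le hcf hM, eventually_gt_atTop 0]
    with β ⟨_, hbound, _⟩ hβ0
  rw [norm_sub_rev]
  exact Real.le_sqrt_of_sq_le ((le_div_iff₀ hβ0).2 (by linarith))

end IsResolventOf

theorem mem_dom_of_limsup_approx_form_general
    {L : Type*} [NormedAddCommGroup L] [InnerProductSpace ℝ L]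
    (E : L → L → ℝ) (H : Submodule ℝ L) (α₀ K : ℝ)
    (hcf : IsClosedForm E H α₀ K)
    (G : ℝ → L →ₗ[ℝ] L) (hG : IsResolventOf E H α₀ G)
    (u : L)
    (hlimsup : Filter.limsup
        (fun β : ℝ => ((β * ⟪u - β • G β u, u⟫ : ℝ) : EReal)) atTop < ⊤) :
    u ∈ H := by
  obtain ⟨M, hM⟩ := exists_eventually_le_of_limsup_coe_lt_top hlimsup
  obtain ⟨N, hN⟩ := eventually_atTop.1 (hG.eventually_bounds_of_approx_form_le hcf hM)
  have hNn : ∀ n : ℕ, N ≤ N + n := fun n => le_add_of_nonneg_right n.cast_nonneg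
  have hshift : Tendsto (fun n : ℕ => N + (n : ℝ)) atTop atTop :=
    tendsto_atTop_add_const_left _ _ tendsto_natCast_atTop_atTop
  exact hcf.mem_of_tendsto_of_HnormSq_le (w := fun n : ℕ => (N + n : ℝ) • G (N + n) u) _
    (fun n => H.smul_mem _ (hG.1 _ (hN _ (hNn n)).1 u)) (fun n => (hN _ (hNn n)).2.2)
    ((hG.tendsto_smul_apply hcf hM).comp hshift)

/-- With `ℰ^{(β)}(u,v) := β ⟨u − β G_β u, v⟩_𝓛` for `β > α₀`:
if `u ∈ 𝓛` satisfies `limsup_{β→∞} ℰ^{(β)}(u,u) < ∞`, then `u ∈ 𝓗`. -/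
theorem mem_dom_of_limsup_approx_form
    {L : Type*} [NormedAddCommGroup L] [InnerProductSpace ℝ L] [CompleteSpace L]
    [TopologicalSpace.SeparableSpace L]
    (E : L → L → ℝ) (H : Submodule ℝ L) (α₀ K : ℝ)
    (hcf : IsClosedForm E H α₀ K)
    (G : ℝ → L →ₗ[ℝ] L) (hG : IsResolventOf E H α₀ G)
    (u : L)
    (hlimsup : Filter.limsup
        (fun β : ℝ => ((β * ⟪u - β • G β u, u⟫ : ℝ) : EReal)) atTop < ⊤) :
    u ∈ H :=
  mem_dom_of_limsup_approx_form_general E H α₀ K hcf G hG u hlimsup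
end
end

section
/- Let (ℰ,𝓗) be a closed bilinear form on 𝓛 with constants α₀, K and associated resolvent (G_α)_{α>α₀}, and for β > α₀ set ℰ^{(β)}(u,v) := β⟨u − βG_β u, v⟩_𝓛. Then: (a) for every α > α₀, the subspace G_α(𝓛) is dense in the Hilbert space (𝓗, ‖·‖_𝓗); and (b) for all u, v ∈ 𝓗, lim_{β→∞} ℰ^{(β)}(u,v) = ℰ(u,v). -/
/-!
With the inner product `ℰ^s_{α₀+1}`, `𝓗` is a Hilbert space on which `ℰ_{α₀+1}` is bounded and
coercive. If `x ∈ 𝓗` is orthogonal to `G_{α₀+1}(𝓛)`, Lax–Milgram writes `⟨x, ·⟩_𝓗` as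
`ℰ_{α₀+1}(·, w)`; testing against `G_{α₀+1} f` gives `⟨f, w⟩_𝓛 = 0` for all `f`, so `w = 0` and
`x = 0`. The resolvent equation gives `G_{α₀+1}(𝓛) ⊆ G_α(𝓛)`, hence (a).

Since `ℰ^{(β)}(u, v) = ℰ(β G_β u, v)`, (b) reduces to `w_β := β G_β u - u → 0` in `𝓗`. The identity
`‖w_β‖²_𝓗 + (β - α₀ - 1) ‖w_β‖²_𝓛 = -ℰ(u, w_β)` bounds `‖w_β‖_𝓗` by a multiple of `‖u‖_𝓗` and
forces `‖w_β‖_𝓛 → 0`. For `u = G_{α₀+1} f` the right-hand side is `⟨(α₀ + 1) u - f, w_β⟩_𝓛`, so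
then `‖w_β‖_𝓗 → 0`; density and the uniform bound extend this to every `u ∈ 𝓗`.
-/

open Filter Topology
open scoped RealInnerProductSpace

noncomputable section

lemma tendsto_zero_of_sq_le {ι : Type*} {l : Filter ι} {x y : ι → ℝ} (hx : ∀ i, 0 ≤ x i)
    (hxy : ∀ᶠ i in l, x i ^ 2 ≤ y i) (hy : Tendsto y l (𝓝 0)) : Tendsto x l (𝓝 0) := by
  refine squeeze_zero' (Eventually.of_forall hx) ?_ (by simpa using hy.sqrt)
  filter_upwards [hxy] with i hi
  exact Real.le_sqrt_of_sq_le hi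

lemma tendsto_zero_of_denseRange {ι X Y : Type*} [PseudoMetricSpace X] {l : Filter ι}
    {p : ι → X → ℝ} {g : Y → X} (hg : DenseRange g) {C : ℝ}
    (hp : ∀ᶠ i in l, ∀ x y, p i x ≤ p i y + C * dist x y) (hp0 : ∀ i x, 0 ≤ p i x)
    (hpg : ∀ y, Tendsto (fun i => p i (g y)) l (𝓝 0)) (x : X) :
    Tendsto (fun i => p i x) l (𝓝 0) := by
  rw [Metric.tendsto_nhds]
  intro ε hε
  have hM : 0 < |C| + 1 := by positivity
  obtain ⟨y, hy⟩ := hg.exists_dist_lt x (div_pos hε (mul_pos two_pos hM))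
  filter_upwards [hp, (hpg y).eventually (gt_mem_nhds (half_pos hε))] with i hi hiy
  have hCd : C * dist x (g y) < ε / 2 := calc
    C * dist x (g y) ≤ (|C| + 1) * dist x (g y) := by
      gcongr; exact (le_abs_self C).trans (le_add_of_nonneg_right zero_le_one)
    _ < (|C| + 1) * (ε / (2 * (|C| + 1))) := by gcongr
    _ = ε / 2 := by field_simp
  rw [Real.dist_0_eq_abs, abs_of_nonneg (hp0 i x)]
  linarith [hi x (g y)]

lemma hnorm_nonneg {L : Type*} [NormedAddCommGroup L] [InnerProductSpace ℝ L]
    (E : L → L → ℝ) (α₀ : ℝ) (u : L) : 0 ≤ Hnorm E α₀ u :=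
  Real.sqrt_nonneg _

namespace IsClosedForm

variable {L : Type*} [NormedAddCommGroup L] [InnerProductSpace ℝ L]
  {E : L → L → ℝ} {H : Submodule ℝ L} {α₀ K : ℝ}

lemma nonneg_add_one (hcf : IsClosedForm E H α₀ K) {u : L} (hu : u ∈ H) :
    0 ≤ E u u + (α₀ + 1) * ⟪u, u⟫ := by
  nlinarith [hcf.nonneg u hu, real_inner_self_nonneg (x := u)]

lemma sq_hnorm (hcf : IsClosedForm E H α₀ K) {u : L} (hu : u ∈ H) :
    Hnorm E α₀ u ^ 2 = E u u + (α₀ + 1) * ⟪u, u⟫ :=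
  Real.sq_sqrt (hcf.nonneg_add_one hu)

lemma norm_le_hnorm (hcf : IsClosedForm E H α₀ K) {u : L} (hu : u ∈ H) :
    ‖u‖ ≤ Hnorm E α₀ u := by
  rw [Hnorm, ← Real.sqrt_mul_self (norm_nonneg u), ← real_inner_self_eq_norm_mul_norm]
  exact Real.sqrt_le_sqrt (by linarith [hcf.nonneg u hu])

lemma sub_left_s5 (hcf : IsClosedForm E H α₀ K) {u v w : L} (hu : u ∈ H) (hv : v ∈ H)
    (hw : w ∈ H) : E (u - v) w = E u w - E v w := by
  rw [sub_eq_add_neg, ← neg_one_smul ℝ v, hcf.add_left _ _ _ hu (H.smul_mem _ hv) hw,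
    hcf.smul_left _ _ _ hv hw]
  ring

lemma abs_le_hnorm_mul (hcf : IsClosedForm E H α₀ K) {u v : L} (hu : u ∈ H) (hv : v ∈ H) :
    |E u v| ≤ (K + |α₀ + 1|) * Hnorm E α₀ u * Hnorm E α₀ v := by
  have hinner : |(α₀ + 1) * ⟪u, v⟫| ≤ |α₀ + 1| * (Hnorm E α₀ u * Hnorm E α₀ v) := by
    rw [abs_mul]
    gcongr
    exact (abs_real_inner_le_norm u v).trans
      (mul_le_mul (hcf.norm_le_hnorm hu) (hcf.norm_le_hnorm hv) (norm_nonneg v)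
        (hnorm_nonneg E α₀ u))
  calc |E u v| = |(E u v + (α₀ + 1) * ⟪u, v⟫) - (α₀ + 1) * ⟪u, v⟫| := by ring_nf
    _ ≤ |E u v + (α₀ + 1) * ⟪u, v⟫| + |(α₀ + 1) * ⟪u, v⟫| := abs_sub _ _
    _ ≤ K * Hnorm E α₀ u * Hnorm E α₀ v + |α₀ + 1| * (Hnorm E α₀ u * Hnorm E α₀ v) :=
      add_le_add (hcf.sector u hu v hv) hinner
    _ = (K + |α₀ + 1|) * Hnorm E α₀ u * Hnorm E α₀ v := by ring

lemma tendsto_left_zero (hcf : IsClosedForm E H α₀ K) {ι : Type*} {l : Filter ι}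
    {w : ι → L} (hw : ∀ᶠ i in l, w i ∈ H) (hlim : Tendsto (fun i => Hnorm E α₀ (w i)) l (𝓝 0))
    {v : L} (hv : v ∈ H) : Tendsto (fun i => E (w i) v) l (𝓝 0) := by
  have hbound := (hlim.const_mul (K + |α₀ + 1|)).mul_const (Hnorm E α₀ v)
  rw [mul_zero, zero_mul] at hbound
  refine squeeze_zero_norm' ?_ hbound
  filter_upwards [hw] with i hi
  exact hcf.abs_le_hnorm_mul hi hv

/-- `𝓗` with the inner product `ℰ^s_{α₀+1}`; indexing the synonym by the proof `hcf` lets its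
instances be global. -/
def Domain (_ : IsClosedForm E H α₀ K) : Type _ := H

namespace Domain

variable {hcf : IsClosedForm E H α₀ K}

instance : AddCommGroup hcf.Domain := inferInstanceAs (AddCommGroup H)

instance : Module ℝ hcf.Domain := inferInstanceAs (Module ℝ H)

def val : hcf.Domain →ₗ[ℝ] L := H.subtype

lemma val_mem (x : hcf.Domain) : val x ∈ H := (show H from x).2

def mk (u : L) (hu : u ∈ H) : hcf.Domain := show H from ⟨u, hu⟩

@[simp] lemma val_mk (u : L) (hu : u ∈ H) : val (mk u hu : hcf.Domain) = u := rfl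

lemma val_injective : Function.Injective (val : hcf.Domain → L) := Subtype.val_injective

abbrev innerCore : InnerProductSpace.Core ℝ hcf.Domain where
  inner x y := (E (val x) (val y) + E (val y) (val x)) / 2 + (α₀ + 1) * ⟪val x, val y⟫
  conj_inner_symm x y := by
    simp only [conj_trivial, real_inner_comm (val x)]
    ring
  re_inner_nonneg x := by
    simpa using hcf.nonneg_add_one (val_mem x)
  add_left x y z := by
    simp only [map_add, hcf.add_left _ _ _ (val_mem x) (val_mem y) (val_mem z),
      hcf.add_right _ _ _ (val_mem z) (val_mem x) (val_mem y), inner_add_left]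
    ring
  smul_left x y r := by
    simp only [map_smul, hcf.smul_left _ _ _ (val_mem x) (val_mem y),
      hcf.smul_right _ _ _ (val_mem y) (val_mem x), real_inner_smul_left, conj_trivial]
    ring
  definite x hx := by
    have hsq : E (val x) (val x) + (α₀ + 1) * ⟪val x, val x⟫ = 0 := by
      linear_combination (hx : _ = (0 : ℝ))
    have h0 : ⟪val x, val x⟫ = 0 := by
      nlinarith [hcf.nonneg _ (val_mem x), real_inner_self_nonneg (x := val x)]
    exact val_injective (by simpa using h0)

instance : NormedAddCommGroup hcf.Domain := innerCore.toNormedAddCommGroup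

instance : InnerProductSpace ℝ hcf.Domain := InnerProductSpace.ofCore innerCore.toCore

lemma norm_eq (x : hcf.Domain) : ‖x‖ = Hnorm E α₀ (val x) := by
  rw [norm_eq_sqrt_real_inner, Hnorm]
  congr 1
  show (E (val x) (val x) + E (val x) (val x)) / 2 + (α₀ + 1) * ⟪val x, val x⟫ = _
  ring

lemma dist_eq (x y : hcf.Domain) : dist x y = Hnorm E α₀ (val x - val y) := by
  rw [dist_eq_norm, norm_eq, map_sub]

instance : CompleteSpace hcf.Domain := by
  refine Metric.complete_of_cauchySeq_tendsto fun x hx => ?_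
  simp only [Metric.cauchySeq_iff, dist_eq] at hx
  obtain ⟨l, hl, hlim⟩ := hcf.hilbert (fun n => val (x n)) (fun n => val_mem (x n))
    fun ε hε => by simpa using hx ε hε
  refine ⟨mk l hl, tendsto_iff_dist_tendsto_zero.mpr ?_⟩
  simpa only [dist_eq, val_mk] using hlim

def coform : hcf.Domain →L[ℝ] hcf.Domain →L[ℝ] ℝ :=
  LinearMap.mkContinuous₂
    (LinearMap.mk₂ ℝ (fun x y => E (val y) (val x) + (α₀ + 1) * ⟪val y, val x⟫)
      (fun x x' y => by
        rw [map_add, hcf.add_right _ _ _ (val_mem y) (val_mem x) (val_mem x'), inner_add_right]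
        ring)
      (fun c x y => by
        rw [map_smul, hcf.smul_right _ _ _ (val_mem y) (val_mem x), real_inner_smul_right,
          smul_eq_mul]
        ring)
      (fun x y y' => by
        rw [map_add, hcf.add_left _ _ _ (val_mem y) (val_mem y') (val_mem x), inner_add_left]
        ring)
      (fun c x y => by
        rw [map_smul, hcf.smul_left _ _ _ (val_mem y) (val_mem x), real_inner_smul_left,
          smul_eq_mul]
        ring))
    K fun x y => by
      rw [Real.norm_eq_abs, norm_eq, norm_eq, mul_right_comm]
      exact hcf.sector _ (val_mem y) _ (val_mem x)

lemma coform_apply (x y : hcf.Domain) :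
    coform x y = E (val y) (val x) + (α₀ + 1) * ⟪val y, val x⟫ := rfl

lemma isCoercive_coform : IsCoercive (coform : hcf.Domain →L[ℝ] hcf.Domain →L[ℝ] ℝ) :=
  ⟨1, one_pos, fun x => by rw [one_mul, coform_apply, norm_eq, ← sq, hcf.sq_hnorm (val_mem x)]⟩

end Domain

lemma hnorm_add_le (hcf : IsClosedForm E H α₀ K) {u v : L} (hu : u ∈ H) (hv : v ∈ H) :
    Hnorm E α₀ (u + v) ≤ Hnorm E α₀ u + Hnorm E α₀ v := by
  simpa only [Domain.norm_eq, map_add, Domain.val_mk] using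
    norm_add_le (Domain.mk u hu : hcf.Domain) (Domain.mk v hv)

end IsClosedForm

namespace IsResolventOf

open IsClosedForm

variable {L : Type*} [NormedAddCommGroup L] [InnerProductSpace ℝ L]
  {E : L → L → ℝ} {H : Submodule ℝ L} {α₀ K : ℝ} {G : ℝ → L →ₗ[ℝ] L}

lemma mem (hG : IsResolventOf E H α₀ G) {α : ℝ} (hα : α₀ < α) (f : L) : G α f ∈ H :=
  hG.1 α hα f

lemma form_add_inner (hG : IsResolventOf E H α₀ G) {α : ℝ} (hα : α₀ < α) (f : L) {u : L}
    (hu : u ∈ H) : E (G α f) u + α * ⟪G α f, u⟫ = ⟪f, u⟫ :=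
  hG.2.1 α hα f u hu

lemma apply_add_smul_apply (hG : IsResolventOf E H α₀ G) {α β : ℝ} (hα : α₀ < α)
    (hβ : α₀ < β) (f : L) : G α (f + (α - β) • G β f) = G β f := by
  rw [map_add, map_smul, ← sub_eq_zero, ← hG.2.2.1 α β hα hβ f]
  abel

lemma smul_apply_sub_mem (hG : IsResolventOf E H α₀ G) {β : ℝ} (hβ : α₀ < β) {u : L}
    (hu : u ∈ H) : β • G β u - u ∈ H :=
  H.sub_mem (H.smul_mem β (hG.mem hβ u)) hu

def toDomain (hG : IsResolventOf E H α₀ G) (hcf : IsClosedForm E H α₀ K) {α : ℝ}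
    (hα : α₀ < α) : L →ₗ[ℝ] hcf.Domain :=
  (G α).codRestrict H (hG.mem hα)

lemma val_toDomain (hG : IsResolventOf E H α₀ G) (hcf : IsClosedForm E H α₀ K) {α : ℝ}
    (hα : α₀ < α) (f : L) : Domain.val (hG.toDomain hcf hα f) = G α f :=
  rfl

lemma orthogonal_range_toDomain (hG : IsResolventOf E H α₀ G) (hcf : IsClosedForm E H α₀ K) :
    (LinearMap.range (hG.toDomain hcf (lt_add_one α₀)))ᗮ = ⊥ := by
  rw [Submodule.eq_bot_iff]
  intro x hx
  obtain ⟨w, rfl⟩ := Domain.isCoercive_coform.continuousLinearEquivOfBilin.surjective x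
  have hw : ∀ f, ⟪f, Domain.val w⟫ = 0 := fun f => by
    rw [← hG.form_add_inner (lt_add_one α₀) f (Domain.val_mem w),
      ← hG.val_toDomain hcf (lt_add_one α₀),
      ← Domain.coform_apply, ← IsCoercive.continuousLinearEquivOfBilin_apply, real_inner_comm]
    exact (Submodule.mem_orthogonal _ _).mp hx _ (LinearMap.mem_range_self _ f)
  have hw0 : w = 0 := Domain.val_injective (by simpa using hw (Domain.val w))
  rw [hw0, map_zero]

lemma denseRange_toDomain (hG : IsResolventOf E H α₀ G) (hcf : IsClosedForm E H α₀ K)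
    {α : ℝ} (hα : α₀ < α) : DenseRange (hG.toDomain hcf hα) := by
  have hdense : DenseRange (hG.toDomain hcf (lt_add_one α₀)) := by
    rw [DenseRange, ← LinearMap.coe_range, Submodule.dense_iff_topologicalClosure_eq_top,
      Submodule.topologicalClosure_eq_top_iff]
    exact hG.orthogonal_range_toDomain hcf
  refine Dense.mono ?_ hdense
  rintro _ ⟨f, rfl⟩
  exact ⟨f + (α - (α₀ + 1)) • G (α₀ + 1) f,
    Domain.val_injective (hG.apply_add_smul_apply hα (lt_add_one α₀) f)⟩

lemma form_smul_apply (hG : IsResolventOf E H α₀ G) (hcf : IsClosedForm E H α₀ K) {β : ℝ}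
    (hβ : α₀ < β) (f : L) {v : L} (hv : v ∈ H) :
    E (β • G β f) v = β * ⟪f - β • G β f, v⟫ := by
  rw [hcf.smul_left _ _ _ (hG.mem hβ f) hv, inner_sub_left, real_inner_smul_left]
  linear_combination β * hG.form_add_inner hβ f hv

lemma sq_hnorm_smul_apply_sub (hG : IsResolventOf E H α₀ G) (hcf : IsClosedForm E H α₀ K)
    {β : ℝ} (hβ : α₀ < β) {u : L} (hu : u ∈ H) :
    Hnorm E α₀ (β • G β u - u) ^ 2 + (β - (α₀ + 1)) * ‖β • G β u - u‖ ^ 2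
      = -E u (β • G β u - u) := by
  have hw := hG.smul_apply_sub_mem hβ hu
  have hu' : u - β • G β u = -(β • G β u - u) := (neg_sub _ _).symm
  rw [hcf.sq_hnorm hw, hcf.sub_left_s5 (H.smul_mem β (hG.mem hβ u)) hu hw,
    hG.form_smul_apply hcf hβ u hw, hu', inner_neg_left, real_inner_self_eq_norm_sq]
  ring

lemma hnorm_smul_apply_sub_le (hG : IsResolventOf E H α₀ G) (hcf : IsClosedForm E H α₀ K)
    {β : ℝ} (hβ : α₀ + 1 ≤ β) {u : L} (hu : u ∈ H) :
    Hnorm E α₀ (β • G β u - u) ≤ (K + |α₀ + 1|) * Hnorm E α₀ u := by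
  have hβ' : α₀ < β := by linarith
  have hid := hG.sq_hnorm_smul_apply_sub hcf hβ' hu
  have hE := (neg_le_abs _).trans (hcf.abs_le_hnorm_mul hu (hG.smul_apply_sub_mem hβ' hu))
  have hC : 0 ≤ (K + |α₀ + 1|) * Hnorm E α₀ u :=
    mul_nonneg (by linarith [hcf.one_le_K, abs_nonneg (α₀ + 1)]) (hnorm_nonneg E α₀ u)
  nlinarith [hnorm_nonneg E α₀ (β • G β u - u), sq_nonneg ‖β • G β u - u‖]

lemma tendsto_norm_smul_apply_sub (hG : IsResolventOf E H α₀ G) (hcf : IsClosedForm E H α₀ K)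
    {u : L} (hu : u ∈ H) : Tendsto (fun β => ‖β • G β u - u‖) atTop (𝓝 0) := by
  set C := ((K + |α₀ + 1|) * Hnorm E α₀ u) ^ 2
  refine tendsto_zero_of_sq_le (fun _ => norm_nonneg _) (y := fun β => C / (β - (α₀ + 1))) ?_
    (tendsto_const_nhds.div_atTop (tendsto_atTop_add_const_right _ _ tendsto_id))
  filter_upwards [eventually_gt_atTop (α₀ + 1)] with β hβ
  have hβ' : α₀ < β := by linarith
  have hid := hG.sq_hnorm_smul_apply_sub hcf hβ' hu
  have hE := (neg_le_abs _).trans (hcf.abs_le_hnorm_mul hu (hG.smul_apply_sub_mem hβ' hu))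
  have hle := hG.hnorm_smul_apply_sub_le hcf hβ.le hu
  rw [le_div_iff₀ (by linarith)]
  nlinarith [hnorm_nonneg E α₀ (β • G β u - u), hnorm_nonneg E α₀ u]

lemma tendsto_hnorm_smul_apply_sub_of_eq_resolvent (hG : IsResolventOf E H α₀ G)
    (hcf : IsClosedForm E H α₀ K) (f : L) :
    Tendsto (fun β => Hnorm E α₀ (β • G β (G (α₀ + 1) f) - G (α₀ + 1) f)) atTop (𝓝 0) := by
  set u := G (α₀ + 1) f
  have hu : u ∈ H := hG.mem (lt_add_one α₀) f
  refine tendsto_zero_of_sq_le (fun _ => hnorm_nonneg _ _ _) ?_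
    (by simpa using (hG.tendsto_norm_smul_apply_sub hcf hu).const_mul ‖(α₀ + 1) • u - f‖)
  filter_upwards [eventually_ge_atTop (α₀ + 1)] with β hβ
  have hw := hG.smul_apply_sub_mem (lt_of_lt_of_le (lt_add_one α₀) hβ) hu
  have hEu : -E u (β • G β u - u) = ⟪(α₀ + 1) • u - f, β • G β u - u⟫ := by
    rw [inner_sub_left, real_inner_smul_left, ← hG.form_add_inner (lt_add_one α₀) f hw]
    ring
  have hid := hG.sq_hnorm_smul_apply_sub hcf (lt_of_lt_of_le (lt_add_one α₀) hβ) hu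
  nlinarith [real_inner_le_norm ((α₀ + 1) • u - f) (β • G β u - u),
    mul_nonneg (sub_nonneg.2 hβ) (sq_nonneg ‖β • G β u - u‖)]

lemma hnorm_smul_apply_sub_le_add (hG : IsResolventOf E H α₀ G) (hcf : IsClosedForm E H α₀ K)
    {β : ℝ} (hβ : α₀ + 1 ≤ β) {u v : L} (hu : u ∈ H) (hv : v ∈ H) :
    Hnorm E α₀ (β • G β u - u)
      ≤ Hnorm E α₀ (β • G β v - v) + (K + |α₀ + 1|) * Hnorm E α₀ (u - v) := by
  have hβ' : α₀ < β := by linarith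
  have hsplit : β • G β u - u = (β • G β v - v) + (β • G β (u - v) - (u - v)) := by
    rw [map_sub, smul_sub]
    abel
  rw [hsplit]
  exact (hcf.hnorm_add_le (hG.smul_apply_sub_mem hβ' hv)
    (hG.smul_apply_sub_mem hβ' (H.sub_mem hu hv))).trans
      (add_le_add le_rfl (hG.hnorm_smul_apply_sub_le hcf hβ (H.sub_mem hu hv)))

lemma tendsto_hnorm_smul_apply_sub (hG : IsResolventOf E H α₀ G) (hcf : IsClosedForm E H α₀ K)
    {u : L} (hu : u ∈ H) :
    Tendsto (fun β => Hnorm E α₀ (β • G β u - u)) atTop (𝓝 0) := by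
  refine tendsto_zero_of_denseRange (hG.denseRange_toDomain hcf (lt_add_one α₀))
    (p := fun β x => Hnorm E α₀ (β • G β (Domain.val x) - Domain.val x))
    (C := K + |α₀ + 1|) ?_
    (fun _ _ => hnorm_nonneg _ _ _) (hG.tendsto_hnorm_smul_apply_sub_of_eq_resolvent hcf)
    (Domain.mk u hu : hcf.Domain)
  filter_upwards [eventually_ge_atTop (α₀ + 1)] with β hβ x y
  rw [Domain.dist_eq]
  exact hG.hnorm_smul_apply_sub_le_add hcf hβ (Domain.val_mem x) (Domain.val_mem y)

end IsResolventOf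

theorem range_dense_and_approx_form_tendsto_general
    {L : Type*} [NormedAddCommGroup L] [InnerProductSpace ℝ L]
    (E : L → L → ℝ) (H : Submodule ℝ L) (α₀ K : ℝ)
    (hcf : IsClosedForm E H α₀ K)
    (G : ℝ → L →ₗ[ℝ] L) (hG : IsResolventOf E H α₀ G) :
    -- (a) density of `G_α(𝓛)` in `(𝓗, ‖·‖_𝓗)`
    (∀ α > α₀, ∀ u ∈ H, ∀ ε > (0:ℝ), ∃ f : L, Hnorm E α₀ (G α f - u) < ε) ∧
    -- (b) convergence of the approximating forms
    (∀ u ∈ H, ∀ v ∈ H,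
      Tendsto (fun β : ℝ => β * ⟪u - β • G β u, v⟫) atTop (𝓝 (E u v))) := by
  refine ⟨fun α hα u hu ε hε => ?_, fun u hu v hv => ?_⟩
  · obtain ⟨f, hf⟩ :=
      (hG.denseRange_toDomain hcf hα).exists_dist_lt (IsClosedForm.Domain.mk u hu) hε
    refine ⟨f, ?_⟩
    rwa [dist_comm, IsClosedForm.Domain.dist_eq, hG.val_toDomain, IsClosedForm.Domain.val_mk] at hf
  · have hrem := hcf.tendsto_left_zero (eventually_gt_atTop α₀ |>.mono fun β hβ =>
      hG.smul_apply_sub_mem hβ hu) (hG.tendsto_hnorm_smul_apply_sub hcf hu) hv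
    have hlim : Tendsto (fun β => E u v + E (β • G β u - u) v) atTop (𝓝 (E u v)) := by
      simpa using tendsto_const_nhds.add hrem
    refine hlim.congr' ?_
    filter_upwards [eventually_gt_atTop α₀] with β hβ
    rw [hcf.sub_left_s5 (H.smul_mem β (hG.mem hβ u)) hu hv, hG.form_smul_apply hcf hβ u hv]
    ring

/-- With `ℰ^{(β)}(u,v) := β ⟨u − β G_β u, v⟩_𝓛` for `β > α₀`:
(a) for every `α > α₀`, `G_α(𝓛)` is dense in the Hilbert space `(𝓗, ‖·‖_𝓗)`; and
(b) `lim_{β→∞} ℰ^{(β)}(u,v) = ℰ(u,v)` for all `u, v ∈ 𝓗`. -/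
theorem range_dense_and_approx_form_tendsto
    {L : Type*} [NormedAddCommGroup L] [InnerProductSpace ℝ L] [CompleteSpace L]
    [TopologicalSpace.SeparableSpace L]
    (E : L → L → ℝ) (H : Submodule ℝ L) (α₀ K : ℝ)
    (hcf : IsClosedForm E H α₀ K)
    (G : ℝ → L →ₗ[ℝ] L) (hG : IsResolventOf E H α₀ G) :
    -- (a) density of `G_α(𝓛)` in `(𝓗, ‖·‖_𝓗)`
    (∀ α > α₀, ∀ u ∈ H, ∀ ε > (0:ℝ), ∃ f : L, Hnorm E α₀ (G α f - u) < ε) ∧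
    -- (b) convergence of the approximating forms
    (∀ u ∈ H, ∀ v ∈ H,
      Tendsto (fun β : ℝ => β * ⟪u - β • G β u, v⟫) atTop (𝓝 (E u v))) :=
  range_dense_and_approx_form_tendsto_general E H α₀ K hcf G hG

end
end

section
/- Let (ℰ,𝓗) be a closed bilinear form on 𝓛 with constants α₀, K and associated resolvent (G_α)_{α>α₀}. Let (T_t)_{t≥0} be a strongly continuous semigroup on 𝓛 with ‖e^{−α₀ t}T_t‖_op ≤ 1 such that G_α f = ∫₀^∞ e^{−α t} T_t f dt for all f ∈ 𝓛 and α > α₀, and let A be the generator of (T_t) with domain D(A). Then D(A) ⊆ 𝓗, and for every u ∈ D(A) and every v ∈ 𝓗, ℰ(u,v) = −⟨Au, v⟩_𝓛. -/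
/-!
Take `α = α₀ + 1`. Laplace-transforming the difference quotients of the semigroup gives
`G_α (t⁻¹ (T_t u - u)) = t⁻¹ (e^{αt} - 1) G_α u - e^{αt} t⁻¹ ∫₀ᵗ e^{-αs} T_s u ds`,
which tends to `α G_α u - u`; since `G_α` is bounded, the same expression tends to `G_α (A u)`.
Hence `u = G_α (α u - A u)` lies in `𝓗`, and the defining identity `ℰ_α(G_α f, v) = ⟨f, v⟩`
of the resolvent, applied to `f = α u - A u`, is `ℰ(u, v) + α⟨u, v⟩ = α⟨u, v⟩ - ⟨A u, v⟩`.
-/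

open Filter Topology
open scoped RealInnerProductSpace

noncomputable section

open MeasureTheory Set

structure IsQuasiContractiveSemigroup {E : Type*} [NormedAddCommGroup E] [NormedSpace ℝ E]
    (T : ℝ → E →L[ℝ] E) (ω : ℝ) : Prop where
  map_add : ∀ s ≥ (0:ℝ), ∀ t ≥ (0:ℝ), T (s + t) = (T s).comp (T t)
  tendsto_nhdsGT_zero : ∀ x : E, Tendsto (fun t : ℝ => T t x) (𝓝[>] 0) (𝓝 x)
  norm_le : ∀ t > (0:ℝ), ‖T t‖ ≤ Real.exp (ω * t)

def laplaceTransform {E : Type*} [NormedAddCommGroup E] [NormedSpace ℝ E]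
    (T : ℝ → E →L[ℝ] E) (α : ℝ) (x : E) : E :=
  ∫ t in Ioi (0:ℝ), Real.exp (-α * t) • T t x

theorem tendsto_inv_smul_setIntegral_Ioc {E : Type*} [NormedAddCommGroup E] [NormedSpace ℝ E]
    [CompleteSpace E] {f : ℝ → E} {c : E} (hmeas : StronglyMeasurableAtFilter f (𝓝[>] 0))
    (hf : Tendsto f (𝓝[>] 0) (𝓝 c)) :
    Tendsto (fun h : ℝ => h⁻¹ • ∫ t in Ioc 0 h, f t) (𝓝[>] 0) (𝓝 c) := by
  have hderiv : HasDerivWithinAt (fun h : ℝ => ∫ t in (0:ℝ)..h, f t) c (Ici 0) 0 :=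
    intervalIntegral.integral_hasDerivWithinAt_of_tendsto_ae_right IntervalIntegrable.refl hmeas
      (hf.mono_left inf_le_left)
  have hslope := hasDerivWithinAt_iff_tendsto_slope.mp hderiv
  rw [Ici_sdiff_left] at hslope
  refine hslope.congr' ?_
  filter_upwards [self_mem_nhdsWithin] with h (hh : 0 < h)
  rw [slope_def_module, intervalIntegral.integral_same, sub_zero, sub_zero,
    intervalIntegral.integral_of_le hh.le]

theorem tendsto_inv_mul_exp_mul_sub_one (α : ℝ) :
    Tendsto (fun h : ℝ => h⁻¹ * (Real.exp (α * h) - 1)) (𝓝[>] 0) (𝓝 α) := by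
  have hderiv : HasDerivAt (fun h : ℝ => Real.exp (α * h)) α 0 := by
    simpa using ((hasDerivAt_id (0:ℝ)).const_mul α).exp
  refine ((hasDerivAt_iff_tendsto_slope.mp hderiv).mono_left
    (nhdsWithin_mono 0 fun h hh => ne_of_gt hh)).congr' ?_
  filter_upwards with h
  simp [slope_def_field, div_eq_inv_mul]

namespace IsQuasiContractiveSemigroup

variable {E : Type*} [NormedAddCommGroup E] [NormedSpace ℝ E] {T : ℝ → E →L[ℝ] E} {ω : ℝ}

theorem apply_add (hT : IsQuasiContractiveSemigroup T ω) {s t : ℝ} (hs : 0 ≤ s) (ht : 0 ≤ t)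
    (x : E) : T (s + t) x = T s (T t x) := by
  rw [hT.map_add s hs t ht, ContinuousLinearMap.comp_apply]

theorem continuousOn_orbit (hT : IsQuasiContractiveSemigroup T ω) (x : E) :
    ContinuousOn (fun t => T t x) (Ioi 0) := by
  intro t₀ (ht₀ : 0 < t₀)
  refine (continuousAt_iff_continuous_left'_right'.mpr ⟨?_, ?_⟩).continuousWithinAt
  · have hgap : Tendsto (fun t => t₀ - t) (𝓝[<] t₀) (𝓝[>] 0) := by
      refine tendsto_nhdsWithin_iff.mpr ⟨?_, ?_⟩
      · simpa using ((tendsto_id (x := 𝓝 t₀)).const_sub t₀).mono_left nhdsWithin_le_nhds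
      · filter_upwards [self_mem_nhdsWithin] with t (ht : t < t₀) using sub_pos.mpr ht
    have hsmall := tendsto_iff_norm_sub_tendsto_zero.mp ((hT.tendsto_nhdsGT_zero x).comp hgap)
    rw [ContinuousWithinAt, tendsto_iff_norm_sub_tendsto_zero]
    refine squeeze_zero' (.of_forall fun t => norm_nonneg _) ?_
      (by simpa using hsmall.const_mul (Real.exp (|ω| * t₀)))
    filter_upwards [self_mem_nhdsWithin, Ioo_mem_nhdsLT ht₀] with t (htt₀ : t < t₀) ht
    have hsplit : T t₀ x - T t x = T t (T (t₀ - t) x - x) := by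
      rw [map_sub, ← hT.apply_add ht.1.le (by linarith), add_sub_cancel]
    rw [norm_sub_rev, hsplit]
    calc ‖T t (T (t₀ - t) x - x)‖ ≤ Real.exp (ω * t) * ‖T (t₀ - t) x - x‖ :=
          (T t).le_of_opNorm_le (hT.norm_le t ht.1) _
      _ ≤ Real.exp (|ω| * t₀) * ‖T (t₀ - t) x - x‖ := by
          refine mul_le_mul_of_nonneg_right (Real.exp_le_exp.mpr ?_) (norm_nonneg _)
          calc ω * t ≤ |ω| * t := mul_le_mul_of_nonneg_right (le_abs_self ω) ht.1.le
            _ ≤ |ω| * t₀ := by gcongr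
  · have hgap : Tendsto (fun t => t - t₀) (𝓝[>] t₀) (𝓝[>] 0) := by
      refine tendsto_nhdsWithin_iff.mpr ⟨?_, ?_⟩
      · simpa using ((tendsto_id (x := 𝓝 t₀)).sub_const t₀).mono_left nhdsWithin_le_nhds
      · filter_upwards [self_mem_nhdsWithin] with t (ht : t₀ < t) using sub_pos.mpr ht
    refine (((T t₀).continuous.tendsto x).comp ((hT.tendsto_nhdsGT_zero x).comp hgap)).congr' ?_
    filter_upwards [self_mem_nhdsWithin] with t (ht : t₀ < t)
    rw [Function.comp_apply, Function.comp_apply, ← hT.apply_add ht₀.le (by linarith),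
      add_sub_cancel]

theorem norm_exp_smul_apply_le (hT : IsQuasiContractiveSemigroup T ω) (α : ℝ) {t : ℝ}
    (ht : 0 < t) (x : E) : ‖Real.exp (-α * t) • T t x‖ ≤ Real.exp (-(α - ω) * t) * ‖x‖ := by
  rw [norm_smul, Real.norm_eq_abs, Real.abs_exp]
  calc Real.exp (-α * t) * ‖T t x‖ ≤ Real.exp (-α * t) * (Real.exp (ω * t) * ‖x‖) := by
        gcongr
        exact (T t).le_of_opNorm_le (hT.norm_le t ht) x
    _ = Real.exp (-(α - ω) * t) * ‖x‖ := by
        rw [← mul_assoc, ← Real.exp_add]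
        ring_nf

theorem integrableOn_laplace_integrand (hT : IsQuasiContractiveSemigroup T ω) {α : ℝ}
    (hα : ω < α) (x : E) :
    IntegrableOn (fun t => Real.exp (-α * t) • T t x) (Ioi 0) := by
  have hdecay := integrableOn_exp_mul_Ioi (a := -(α - ω)) (by linarith) 0
  refine Integrable.mono' (hdecay.mul_const ‖x‖) ?_ ?_
  · exact ((continuous_const_mul (-α)).rexp.continuousOn.smul
      (hT.continuousOn_orbit x)).aestronglyMeasurable measurableSet_Ioi
  · filter_upwards [ae_restrict_mem measurableSet_Ioi] with t ht
    exact hT.norm_exp_smul_apply_le α ht x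

theorem laplaceTransform_semigroup_apply (hT : IsQuasiContractiveSemigroup T ω) {α : ℝ} (hα : ω < α)
    {h : ℝ} (hh : 0 < h) (x : E) :
    laplaceTransform T α (T h x) = Real.exp (α * h) •
      (laplaceTransform T α x - ∫ t in Ioc 0 h, Real.exp (-α * t) • T t x) := by
  set f : ℝ → E := fun t => Real.exp (-α * t) • T t x
  have htranslate : ∫ t in Ioi 0, f (t + h) = ∫ t in Ioi h, f t := by
    have := (measurePreserving_add_right volume h).setIntegral_preimage_emb
      (measurableEmbedding_addRight h) f (Ioi h)
    rwa [preimage_add_const_Ioi, sub_self] at this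
  have hshift : laplaceTransform T α (T h x) = Real.exp (α * h) • ∫ t in Ioi h, f t := by
    rw [← htranslate, ← integral_smul]
    refine setIntegral_congr_fun measurableSet_Ioi fun t (ht : 0 < t) => ?_
    simp only [f, smul_smul, ← Real.exp_add, hT.apply_add ht.le hh.le]
    ring_nf
  have hsplit : laplaceTransform T α x = (∫ t in Ioc 0 h, f t) + ∫ t in Ioi h, f t := by
    have hint := hT.integrableOn_laplace_integrand hα x
    rw [laplaceTransform, ← Ioc_union_Ioi_eq_Ioi hh.le, setIntegral_union (Ioc_disjoint_Ioi le_rfl)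
      measurableSet_Ioi (hint.mono_set Ioc_subset_Ioi_self) (hint.mono_set (Ioi_subset_Ioi hh.le))]
  rw [hshift, hsplit, add_sub_cancel_left]

variable [CompleteSpace E] in
theorem tendsto_slope_laplaceTransform (hT : IsQuasiContractiveSemigroup T ω) {α : ℝ}
    (hα : ω < α) (x : E) :
    Tendsto (fun h : ℝ => h⁻¹ • (laplaceTransform T α (T h x) - laplaceTransform T α x))
      (𝓝[>] 0) (𝓝 (α • laplaceTransform T α x - x)) := by
  have hexp : Tendsto (fun h : ℝ => Real.exp (α * h)) (𝓝[>] 0) (𝓝 1) := by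
    simpa using ((continuous_const_mul α).rexp.tendsto 0).mono_left nhdsWithin_le_nhds
  have hintegrand : Tendsto (fun t : ℝ => Real.exp (-α * t) • T t x) (𝓝[>] 0) (𝓝 x) := by
    simpa using (((continuous_const_mul (-α)).rexp.tendsto 0).mono_left
      nhdsWithin_le_nhds).smul (hT.tendsto_nhdsGT_zero x)
  have haverage := tendsto_inv_smul_setIntegral_Ioc
    ⟨Ioi 0, self_mem_nhdsWithin, (hT.integrableOn_laplace_integrand hα x).aestronglyMeasurable⟩
    hintegrand
  have hlim := ((tendsto_inv_mul_exp_mul_sub_one α).smul_const (laplaceTransform T α x)).sub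
    (hexp.smul haverage)
  rw [one_smul] at hlim
  refine hlim.congr' ?_
  filter_upwards [self_mem_nhdsWithin] with h (hh : 0 < h)
  rw [hT.laplaceTransform_semigroup_apply hα hh x]
  module

end IsQuasiContractiveSemigroup

theorem IsResolventOf.continuous {L : Type*} [NormedAddCommGroup L] [InnerProductSpace ℝ L]
    {E : L → L → ℝ} {H : Submodule ℝ L} {α₀ : ℝ} {G : ℝ → L →ₗ[ℝ] L}
    (hG : IsResolventOf E H α₀ G) {α : ℝ} (hα : α₀ < α) : Continuous (G α) := by
  refine AddMonoidHomClass.continuous_of_bound (G α) (α - α₀)⁻¹ fun f => ?_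
  have hpos : 0 < α - α₀ := sub_pos.mpr hα
  have := hG.2.2.2 α hα f
  rw [norm_smul, Real.norm_of_nonneg hpos.le] at this
  rw [inv_mul_eq_div, le_div_iff₀ hpos, mul_comm]
  exact this

theorem form_eq_neg_inner_generator_general
    {L : Type*} [NormedAddCommGroup L] [InnerProductSpace ℝ L] [CompleteSpace L]
    (E : L → L → ℝ) (H : Submodule ℝ L) (α₀ : ℝ)
    (G : ℝ → L →ₗ[ℝ] L) (hG : IsResolventOf E H α₀ G)
    (T : ℝ → L →L[ℝ] L)
    (hTsemi : ∀ s ≥ (0:ℝ), ∀ t ≥ (0:ℝ), T (s + t) = (T s).comp (T t))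
    (hTcont : ∀ f : L, Tendsto (fun t : ℝ => T t f) (𝓝[>] (0:ℝ)) (𝓝 f))
    (hTnorm : ∀ t > (0:ℝ), ‖T t‖ ≤ Real.exp (α₀ * t))
    (hLaplace : ∀ α > α₀, ∀ f : L,
      G α f = ∫ t in Set.Ioi (0:ℝ), Real.exp (-α * t) • T t f)
    (u w : L)
    (hu : Tendsto (fun t : ℝ => t⁻¹ • (T t u - u)) (𝓝[>] (0:ℝ)) (𝓝 w)) :
    u ∈ H ∧ ∀ v ∈ H, E u v = -⟪w, v⟫ := by
  have hT : IsQuasiContractiveSemigroup T α₀ := ⟨hTsemi, hTcont, hTnorm⟩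
  set α := α₀ + 1
  have hα : α₀ < α := lt_add_one α₀
  have hGw : G α w = α • G α u - u := by
    have hGα : ⇑(G α) = laplaceTransform T α := funext (hLaplace α hα)
    refine tendsto_nhds_unique (((hG.continuous hα).tendsto w).comp hu) ?_
    simp only [Function.comp_def, map_smul, map_sub]
    rw [hGα]
    exact hT.tendsto_slope_laplaceTransform hα u
  have hGu : G α (α • u - w) = u := by
    rw [map_sub, map_smul, hGw, sub_sub_cancel]
  refine ⟨hGu ▸ hG.1 α hα _, fun v hv => ?_⟩
  have hform := hG.2.1 α hα (α • u - w) v hv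
  rw [hGu, inner_sub_left, real_inner_smul_left] at hform
  linarith

/-- Let `(ℰ,𝓗)` be a closed form with resolvent `(G_α)`, and let `(T_t)` be
a strongly continuous semigroup with `‖e^{−α₀ t}T_t‖ ≤ 1` whose Laplace transform is `(G_α)`,
with generator `A`.  Then `D(A) ⊆ 𝓗` and `ℰ(u,v) = −⟨Au, v⟩_𝓛` for `u ∈ D(A)`, `v ∈ 𝓗`:
here `u ∈ D(A)` with `Au = w` means `t⁻¹(T_t u − u) → w` as `t ↓ 0`. -/
theorem form_eq_neg_inner_generator
    {L : Type*} [NormedAddCommGroup L] [InnerProductSpace ℝ L] [CompleteSpace L]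
    [TopologicalSpace.SeparableSpace L]
    (E : L → L → ℝ) (H : Submodule ℝ L) (α₀ K : ℝ)
    (hcf : IsClosedForm E H α₀ K)
    (G : ℝ → L →ₗ[ℝ] L) (hG : IsResolventOf E H α₀ G)
    (T : ℝ → L →L[ℝ] L)
    (hT0 : T 0 = ContinuousLinearMap.id ℝ L)
    (hTsemi : ∀ s ≥ (0:ℝ), ∀ t ≥ (0:ℝ), T (s + t) = (T s).comp (T t))
    (hTcont : ∀ f : L, Tendsto (fun t : ℝ => T t f) (𝓝[>] (0:ℝ)) (𝓝 f))
    (hTnorm : ∀ t > (0:ℝ), ‖T t‖ ≤ Real.exp (α₀ * t))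
    (hLaplace : ∀ α > α₀, ∀ f : L,
      G α f = ∫ t in Set.Ioi (0:ℝ), Real.exp (-α * t) • T t f)
    (u w : L)
    (hu : Tendsto (fun t : ℝ => t⁻¹ • (T t u - u)) (𝓝[>] (0:ℝ)) (𝓝 w)) :
    u ∈ H ∧ ∀ v ∈ H, E u v = -⟪w, v⟫ :=
  form_eq_neg_inner_generator_general E H α₀ G hG T hTsemi hTcont hTnorm hLaplace u w hu

end
end

section
/- In the Hilbert-convergence setting, let u_n ∈ 𝓛_n for each n and let u ∈ 𝓛. If sup_n ‖u_n‖_{𝓛_n} < ∞ and lim_{n→∞} ⟨u_n, Φ_n v⟩_{𝓛_n} = ⟨u, v⟩_𝓛 for every v ∈ 𝓛, then (u_n) converges weakly to u. -/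
open Filter Topology
open scoped RealInnerProductSpace

variable {𝓛 : ℕ → Type*} [∀ n, NormedAddCommGroup (𝓛 n)] [∀ n, InnerProductSpace ℝ (𝓛 n)]
variable {𝓛₀ : Type*} [NormedAddCommGroup 𝓛₀] [InnerProductSpace ℝ 𝓛₀]

/-- A sequence `u_n ∈ 𝓛_n` converges strongly to `u₀ ∈ 𝓛₀` (relative to the identification
maps `Φ_n : 𝓛₀ → 𝓛_n`) if `‖Φ_n u₀ − u_n‖_{𝓛_n} → 0`. -/
def SConv (Φ : ∀ n, 𝓛₀ → 𝓛 n) (u : ∀ n, 𝓛 n) (u₀ : 𝓛₀) : Prop :=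
  Tendsto (fun n => ‖Φ n u₀ - u n‖) atTop (𝓝 0)

/-- A sequence `u_n ∈ 𝓛_n` converges weakly to `u₀ ∈ 𝓛₀` if `⟨u_n, v_n⟩_{𝓛_n} → ⟨u₀, v₀⟩_{𝓛₀}`
for every sequence `v_n ∈ 𝓛_n` converging strongly to some `v₀ ∈ 𝓛₀`. -/
def WConv (Φ : ∀ n, 𝓛₀ → 𝓛 n) (u : ∀ n, 𝓛 n) (u₀ : 𝓛₀) : Prop :=
  ∀ (v : ∀ n, 𝓛 n) (v₀ : 𝓛₀), SConv Φ v v₀ →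
    Tendsto (fun n => ⟪u n, v n⟫) atTop (𝓝 ⟪u₀, v₀⟫)

/-- In the Hilbert-convergence setting (`Φ_n : 𝓛 → 𝓛_n` linear with
`‖Φ_n u‖ → ‖u‖`), if `sup_n ‖u_n‖ < ∞` and `⟨u_n, Φ_n v⟩_{𝓛_n} → ⟨u, v⟩_𝓛` for every `v ∈ 𝓛`,
then `(u_n)` converges weakly to `u`. -/
theorem weak_conv_of_inner_conv
    [∀ n, CompleteSpace (𝓛 n)] [∀ n, TopologicalSpace.SeparableSpace (𝓛 n)]
    [CompleteSpace 𝓛₀] [TopologicalSpace.SeparableSpace 𝓛₀]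
    (Φ : ∀ n, 𝓛₀ →ₗ[ℝ] 𝓛 n)
    (hΦ : ∀ w : 𝓛₀, Tendsto (fun n => ‖Φ n w‖) atTop (𝓝 ‖w‖))
    (u : ∀ n, 𝓛 n) (u₀ : 𝓛₀)
    (hbdd : ∃ C : ℝ, ∀ n, ‖u n‖ ≤ C)
    (hconv : ∀ v : 𝓛₀, Tendsto (fun n => ⟪u n, Φ n v⟫) atTop (𝓝 ⟪u₀, v⟫)) :
    WConv (fun n => ⇑(Φ n)) u u₀ := by
  intro v v₀ hv
  obtain ⟨C, hC⟩ := hbdd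
  have key : Tendsto (fun n => ⟪u n, v n⟫ - ⟪u n, Φ n v₀⟫) atTop (𝓝 0) := by
    have hb : Tendsto (fun n => (max C 0) * ‖Φ n v₀ - v n‖) atTop (𝓝 0) := by
      simpa using (hv.const_mul (max C 0))
    refine squeeze_zero_norm (fun n => ?_) hb
    have : ⟪u n, v n⟫ - ⟪u n, Φ n v₀⟫ = -⟪u n, Φ n v₀ - v n⟫ := by
      rw [inner_sub_right]; ring
    rw [this, norm_neg]
    calc ‖⟪u n, Φ n v₀ - v n⟫‖ ≤ ‖u n‖ * ‖Φ n v₀ - v n‖ := norm_inner_le_norm _ _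
      _ ≤ (max C 0) * ‖Φ n v₀ - v n‖ :=
        mul_le_mul_of_nonneg_right ((hC n).trans (le_max_left _ _)) (norm_nonneg _)
  have := key.add (hconv v₀)
  simpa using this
end

section
/- In the Hilbert-convergence setting, let A_n be a bounded linear operator on 𝓛_n for each n, let A be a bounded linear operator on 𝓛, and let A_n* and A* denote their Hilbert-space adjoints. Then (A_n) converges strongly to A if and only if (A_n*) converges weakly to A*. -/
open Filter Topology
open scoped RealInnerProductSpace

variable {𝓛 : ℕ → Type*} [∀ n, NormedAddCommGroup (𝓛 n)] [∀ n, InnerProductSpace ℝ (𝓛 n)]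
variable {𝓛₀ : Type*} [NormedAddCommGroup 𝓛₀] [InnerProductSpace ℝ 𝓛₀]

/-- A sequence of operators `A_n` on `𝓛_n` converges strongly to an operator `A₀` on `𝓛₀`
if `A_n u_n → A₀ u₀` strongly whenever `u_n → u₀` strongly. -/
def OpSConv (Φ : ∀ n, 𝓛₀ → 𝓛 n) (A : ∀ n, 𝓛 n → 𝓛 n) (A₀ : 𝓛₀ → 𝓛₀) : Prop :=
  ∀ (u : ∀ n, 𝓛 n) (u₀ : 𝓛₀), SConv Φ u u₀ → SConv Φ (fun n => A n (u n)) (A₀ u₀)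

/-- A sequence of operators `A_n` on `𝓛_n` converges weakly to an operator `A₀` on `𝓛₀`
if `A_n u_n → A₀ u₀` weakly whenever `u_n → u₀` weakly. -/
def OpWConv (Φ : ∀ n, 𝓛₀ → 𝓛 n) (A : ∀ n, 𝓛 n → 𝓛 n) (A₀ : 𝓛₀ → 𝓛₀) : Prop :=
  ∀ (u : ∀ n, 𝓛 n) (u₀ : 𝓛₀), WConv Φ u u₀ → WConv Φ (fun n => A n (u n)) (A₀ u₀)


section Aux

lemma phi_sconv (Φ : ∀ n, 𝓛₀ →ₗ[ℝ] 𝓛 n) (w : 𝓛₀) :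
    SConv (fun n => ⇑(Φ n)) (fun n => Φ n w) w := by
  simp [SConv, tendsto_const_nhds]

lemma sconv_norm (Φ : ∀ n, 𝓛₀ →ₗ[ℝ] 𝓛 n)
    (hΦ : ∀ w : 𝓛₀, Tendsto (fun n => ‖Φ n w‖) atTop (𝓝 ‖w‖))
    {u : ∀ n, 𝓛 n} {u₀ : 𝓛₀} (hu : SConv (fun n => ⇑(Φ n)) u u₀) :
    Tendsto (fun n => ‖u n‖) atTop (𝓝 ‖u₀‖) := by
  have h1 : Tendsto (fun n => ‖u n‖ - ‖Φ n u₀‖) atTop (𝓝 0) := by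
    apply squeeze_zero_norm (fun n => ?_) hu
    calc ‖‖u n‖ - ‖Φ n u₀‖‖ = |‖u n‖ - ‖Φ n u₀‖| := by rw [Real.norm_eq_abs]
    _ ≤ ‖u n - Φ n u₀‖ := abs_norm_sub_norm_le _ _
    _ = ‖Φ n u₀ - u n‖ := norm_sub_rev _ _
  have h2 := (hΦ u₀).add h1
  have heq : (fun n => ‖Φ n u₀‖ + (‖u n‖ - ‖Φ n u₀‖)) = fun n => ‖u n‖ := by
    funext n; ring
  rw [heq] at h2
  simpa using h2

lemma inner_phi_tendsto (Φ : ∀ n, 𝓛₀ →ₗ[ℝ] 𝓛 n)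
    (hΦ : ∀ w : 𝓛₀, Tendsto (fun n => ‖Φ n w‖) atTop (𝓝 ‖w‖)) (u v : 𝓛₀) :
    Tendsto (fun n => ⟪Φ n u, Φ n v⟫) atTop (𝓝 ⟪u, v⟫) := by
  have heq : (fun n => ⟪Φ n u, Φ n v⟫) = fun n =>
      (‖Φ n (u + v)‖ * ‖Φ n (u + v)‖ - ‖Φ n u‖ * ‖Φ n u‖ - ‖Φ n v‖ * ‖Φ n v‖) / 2 := by
    funext n
    rw [real_inner_eq_norm_add_mul_self_sub_norm_mul_self_sub_norm_mul_self_div_two, map_add]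
  rw [heq, real_inner_eq_norm_add_mul_self_sub_norm_mul_self_sub_norm_mul_self_div_two]
  exact ((((hΦ (u + v)).mul (hΦ (u + v))).sub ((hΦ u).mul (hΦ u))).sub
    ((hΦ v).mul (hΦ v))).div_const 2

lemma sconv_wconv (Φ : ∀ n, 𝓛₀ →ₗ[ℝ] 𝓛 n)
    (hΦ : ∀ w : 𝓛₀, Tendsto (fun n => ‖Φ n w‖) atTop (𝓝 ‖w‖))
    {u : ∀ n, 𝓛 n} {u₀ : 𝓛₀} (hu : SConv (fun n => ⇑(Φ n)) u u₀) :
    WConv (fun n => ⇑(Φ n)) u u₀ := by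
  intro v v₀ hv
  have key : ∀ n, ⟪u n, v n⟫ =
      ⟪Φ n u₀, Φ n v₀⟫ + ⟪u n - Φ n u₀, v n⟫ + ⟪Φ n u₀, v n - Φ n v₀⟫ := by
    intro n
    simp only [inner_sub_left, inner_sub_right]
    ring
  have h2 : Tendsto (fun n => ⟪u n - Φ n u₀, v n⟫) atTop (𝓝 0) := by
    have hb : ∀ n, ‖⟪u n - Φ n u₀, v n⟫‖ ≤ ‖Φ n u₀ - u n‖ * ‖v n‖ := by
      intro n
      calc ‖⟪u n - Φ n u₀, v n⟫‖ ≤ ‖u n - Φ n u₀‖ * ‖v n‖ := norm_inner_le_norm _ _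
      _ = ‖Φ n u₀ - u n‖ * ‖v n‖ := by rw [norm_sub_rev]
    have hg := hu.mul (sconv_norm Φ hΦ hv)
    rw [zero_mul] at hg
    exact squeeze_zero_norm hb hg
  have h3 : Tendsto (fun n => ⟪Φ n u₀, v n - Φ n v₀⟫) atTop (𝓝 0) := by
    have hb : ∀ n, ‖⟪Φ n u₀, v n - Φ n v₀⟫‖ ≤ ‖Φ n u₀‖ * ‖Φ n v₀ - v n‖ := by
      intro n
      calc ‖⟪Φ n u₀, v n - Φ n v₀⟫‖ ≤ ‖Φ n u₀‖ * ‖v n - Φ n v₀‖ := norm_inner_le_norm _ _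
      _ = ‖Φ n u₀‖ * ‖Φ n v₀ - v n‖ := by rw [norm_sub_rev (v n)]
    have hg := (hΦ u₀).mul hv
    rw [mul_zero] at hg
    exact squeeze_zero_norm hb hg
  have hsum := ((inner_phi_tendsto Φ hΦ u₀ v₀).add h2).add h3
  have heq : (fun n => ⟪Φ n u₀, Φ n v₀⟫ + ⟪u n - Φ n u₀, v n⟫ + ⟪Φ n u₀, v n - Φ n v₀⟫)
      = fun n => ⟪u n, v n⟫ := funext fun n => (key n).symm
  rw [heq] at hsum
  simpa using hsum

end Aux

/-- In the Hilbert-convergence setting, bounded operators `A_n` on `𝓛_n`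
converge strongly to a bounded operator `A` on `𝓛` if and only if the adjoints `A_n*`
converge weakly to `A*`. -/
theorem opSConv_iff_adjoint_opWConv
    [∀ n, CompleteSpace (𝓛 n)] [∀ n, TopologicalSpace.SeparableSpace (𝓛 n)]
    [CompleteSpace 𝓛₀] [TopologicalSpace.SeparableSpace 𝓛₀]
    (Φ : ∀ n, 𝓛₀ →ₗ[ℝ] 𝓛 n)
    (hΦ : ∀ w : 𝓛₀, Tendsto (fun n => ‖Φ n w‖) atTop (𝓝 ‖w‖))
    (A : ∀ n, 𝓛 n →L[ℝ] 𝓛 n) (A₀ : 𝓛₀ →L[ℝ] 𝓛₀) :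
    OpSConv (fun n => ⇑(Φ n)) (fun n => ⇑(A n)) ⇑A₀ ↔
      OpWConv (fun n => ⇑(Φ n)) (fun n => ⇑(ContinuousLinearMap.adjoint (A n)))
        ⇑(ContinuousLinearMap.adjoint A₀) := by
  constructor
  · intro hS u u₀ hu v v₀ hv
    simp_rw [ContinuousLinearMap.adjoint_inner_left]
    exact hu _ _ (hS v v₀ hv)
  · intro hW u u₀ hu
    have hw : WConv (fun n => ⇑(Φ n)) (fun n => A n (u n)) (A₀ u₀) := by
      intro v v₀ hv
      have hv' := sconv_wconv Φ hΦ hv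
      have h := (hW v v₀ hv') u u₀ hu
      simp_rw [ContinuousLinearMap.adjoint_inner_left] at h
      show Tendsto (fun n => ⟪A n (u n), v n⟫) atTop (𝓝 ⟪A₀ u₀, v₀⟫)
      have hg : (fun n => ⟪A n (u n), v n⟫) = fun n => ⟪v n, A n (u n)⟫ := by
        funext n; exact real_inner_comm _ _
      rw [hg, real_inner_comm]
      exact h
    have hnorm : Tendsto (fun n => ‖A n (u n)‖ ^ 2) atTop (𝓝 (‖A₀ u₀‖ ^ 2)) := by
      have h := (hW (fun n => A n (u n)) (A₀ u₀) hw) u u₀ hu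
      simp_rw [ContinuousLinearMap.adjoint_inner_left, real_inner_self_eq_norm_sq] at h
      exact h
    have hmid : Tendsto (fun n => ⟪A n (u n), Φ n (A₀ u₀)⟫) atTop (𝓝 (‖A₀ u₀‖ ^ 2)) := by
      have h := hw (fun n => Φ n (A₀ u₀)) (A₀ u₀) (phi_sconv Φ (A₀ u₀))
      rwa [real_inner_self_eq_norm_sq] at h
    have hsq : Tendsto (fun n => ‖Φ n (A₀ u₀) - A n (u n)‖ ^ 2) atTop (𝓝 0) := by
      have expand : ∀ n, ‖Φ n (A₀ u₀) - A n (u n)‖ ^ 2 =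
          ‖Φ n (A₀ u₀)‖ ^ 2 - 2 * ⟪A n (u n), Φ n (A₀ u₀)⟫ + ‖A n (u n)‖ ^ 2 := by
        intro n
        rw [norm_sub_sq_real, real_inner_comm]
      have hΦsq : Tendsto (fun n => ‖Φ n (A₀ u₀)‖ ^ 2) atTop (𝓝 (‖A₀ u₀‖ ^ 2)) :=
        (hΦ (A₀ u₀)).pow 2
      have := (hΦsq.sub (hmid.const_mul 2)).add hnorm
      simp_rw [← expand] at this
      have hval : ‖A₀ u₀‖ ^ 2 - 2 * ‖A₀ u₀‖ ^ 2 + ‖A₀ u₀‖ ^ 2 = 0 := by ring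
      rwa [hval] at this
    have := hsq.sqrt
    simp_rw [Real.sqrt_sq (norm_nonneg _), Real.sqrt_zero] at this
    exact this
end
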